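/- Suppose the Lanczos biconjugate A-orthonormalization procedure is run for m steps without breakdown, started with w_1 = r_0^*/β^* where r_0^* = b^* − A^T x_0^* and β^* = ‖r_0^*‖_2 > 0, and let y_m^* ∈ ℝ^m satisfy T_m^T y_m^* = β^* e_1. Then the m-th dual residual vector r_m^* = b^* − A^T x_m^* with x_m^* = x_0^* + W_m y_m^* satisfies r_m^* = −β_{m+1} (e_m^T y_m^*) w_{m+1}; in particular r_m^* is a scalar multiple of w_{m+1}. -/
import Mathlib


open Matrix

/-- Data of the Lanczos biconjugate A-orthonormalization procedure: the matrix `A`,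
the right and left Lanczos-type vectors `v j`, `w j`, the unnormalized vectors
`vhat j`, `what j`, and the recurrence scalars `alpha`, `beta`, `delta`. -/
structure LanczosData (n : ℕ) where
  A : Matrix (Fin n) (Fin n) ℝ
  v : ℕ → (Fin n → ℝ)
  w : ℕ → (Fin n → ℝ)
  vhat : ℕ → (Fin n → ℝ)
  what : ℕ → (Fin n → ℝ)
  alpha : ℕ → ℝ
  beta : ℕ → ℝ
  delta : ℕ → ℝ

/-- The Lanczos biconjugate A-orthonormalization procedure runs `m` steps without
breakdown: `v 0 = w 0 = 0`, `beta 1 = delta 1 = 0`, `⟨w 1, A v 1⟩ = 1`, and for each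
step `1 ≤ j ≤ m` the recurrence relations hold with
`⟨ŵ_{j+1}, A v̂_{j+1}⟩ ≠ 0` (equivalently `delta (j+1) ≠ 0`). -/
def LanczosData.Runs {n : ℕ} (L : LanczosData n) (m : ℕ) : Prop :=
  L.v 0 = 0 ∧ L.w 0 = 0 ∧ L.beta 1 = 0 ∧ L.delta 1 = 0 ∧
  L.w 1 ⬝ᵥ (L.A *ᵥ L.v 1) = 1 ∧
  ∀ j : ℕ, 1 ≤ j → j ≤ m →
    (L.alpha j = L.w j ⬝ᵥ (L.A *ᵥ (L.A *ᵥ L.v j))) ∧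
    (L.vhat (j + 1) = L.A *ᵥ L.v j - L.alpha j • L.v j - L.beta j • L.v (j - 1)) ∧
    (L.what (j + 1) = (L.A)ᵀ *ᵥ L.w j - L.alpha j • L.w j - L.delta j • L.w (j - 1)) ∧
    (L.delta (j + 1) = Real.sqrt |L.what (j + 1) ⬝ᵥ (L.A *ᵥ L.vhat (j + 1))|) ∧
    (L.beta (j + 1) = (L.what (j + 1) ⬝ᵥ (L.A *ᵥ L.vhat (j + 1))) / L.delta (j + 1)) ∧
    (L.v (j + 1) = (L.delta (j + 1))⁻¹ • L.vhat (j + 1)) ∧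
    (L.w (j + 1) = (L.beta (j + 1))⁻¹ • L.what (j + 1)) ∧
    (L.what (j + 1) ⬝ᵥ (L.A *ᵥ L.vhat (j + 1)) ≠ 0)

/-- `V m` is the `n × m` matrix with columns `v 1, …, v m`. -/
def LanczosData.V {n : ℕ} (L : LanczosData n) (m : ℕ) : Matrix (Fin n) (Fin m) ℝ :=
  Matrix.of fun i k => L.v (k.1 + 1) i

/-- `W m` is the `n × m` matrix with columns `w 1, …, w m`. -/
def LanczosData.W {n : ℕ} (L : LanczosData n) (m : ℕ) : Matrix (Fin n) (Fin m) ℝ :=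
  Matrix.of fun i k => L.w (k.1 + 1) i

/-- `T m` is the `m × m` tridiagonal matrix with diagonal `alpha 1, …, alpha m`,
subdiagonal `delta 2, …, delta m` and superdiagonal `beta 2, …, beta m`. -/
def LanczosData.T {n : ℕ} (L : LanczosData n) (m : ℕ) : Matrix (Fin m) (Fin m) ℝ :=
  Matrix.of fun i j =>
    if i.1 = j.1 then L.alpha (i.1 + 1)
    else if i.1 = j.1 + 1 then L.delta (i.1 + 1)
    else if j.1 = i.1 + 1 then L.beta (j.1 + 1)
    else 0

lemma aux_sum_ite {M : Type*} [AddCommMonoid M] {m : ℕ} (c : ℕ) (x : M) :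
    ∑ k : Fin m, (if k.1 = c then x else 0) = if c < m then x else 0 := by
  rcases lt_or_ge c m with h | h
  · rw [if_pos h, Finset.sum_eq_single (⟨c, h⟩ : Fin m)]
    · simp
    · intro k _ hk; rw [if_neg]; intro he; exact hk (Fin.ext he)
    · simp
  · rw [if_neg (not_lt.mpr h)]
    apply Finset.sum_eq_zero; intro k _; rw [if_neg]; omega

/-- Dual residual formula: if `T_mᵀ y_m* = β* e₁` then the dual residual
`r_m* = b* - Aᵀ x_m*` with `x_m* = x₀* + W_m y_m*` satisfies
`r_m* = -β_{m+1} (e_mᵀ y_m*) w_{m+1}`; in particular it is a scalar multiple of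
`w_{m+1}`. -/
theorem lanczos_dual_residual {n m : ℕ} (L : LanczosData n) (hm : 1 ≤ m)
    (hrun : L.Runs m) (bs x0s r0s : Fin n → ℝ) (bets : ℝ)
    (hr0s : r0s = bs - (L.A)ᵀ *ᵥ x0s)
    (hbets : bets = Real.sqrt (r0s ⬝ᵥ r0s)) (hbetspos : 0 < bets)
    (hw1 : L.w 1 = bets⁻¹ • r0s) (ys : Fin m → ℝ)
    (hys : (L.T m)ᵀ *ᵥ ys = bets • (fun k : Fin m => if k.1 = 0 then (1 : ℝ) else 0)) :
    bs - (L.A)ᵀ *ᵥ (x0s + L.W m *ᵥ ys) =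
      (-(L.beta (m + 1) * ys ⟨m - 1, by omega⟩)) • L.w (m + 1) := by
  obtain ⟨hv0, hw0, hb1, hd1, hwv1, hstep⟩ := hrun
  have hAtw : ∀ j : ℕ, 1 ≤ j → j ≤ m →
      (L.A)ᵀ *ᵥ L.w j
        = L.delta j • L.w (j - 1) + L.alpha j • L.w j + L.beta (j + 1) • L.w (j + 1) := by
    intro j h1 h2
    obtain ⟨_, _, hwhat, hdel, hbet, _, hw, hne⟩ := hstep j h1 h2
    have hdne : L.delta (j + 1) ≠ 0 := by
      rw [hdel]; exact (Real.sqrt_pos.mpr (abs_pos.mpr hne)).ne'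
    have hbne : L.beta (j + 1) ≠ 0 := by
      rw [hbet]; exact div_ne_zero hne hdne
    have hbw : L.beta (j + 1) • L.w (j + 1) = L.what (j + 1) := by
      rw [hw, smul_smul, mul_inv_cancel₀ hbne, one_smul]
    rw [hbw, hwhat]; abel
  have hWmul : ∀ z : Fin m → ℝ, L.W m *ᵥ z = ∑ k : Fin m, z k • L.w (k.1 + 1) := by
    intro z; funext i
    simp [Matrix.mulVec, dotProduct, LanczosData.W, Finset.sum_apply, mul_comm]
  have hr0w : bets • L.w 1 = r0s := by
    rw [hw1, smul_smul, mul_inv_cancel₀ hbetspos.ne', one_smul]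
  have hWTy : L.W m *ᵥ ((L.T m)ᵀ *ᵥ ys) = r0s := by
    rw [hys, hWmul, ← hr0w, Finset.sum_eq_single (⟨0, by omega⟩ : Fin m)]
    · simp
    · intro k _ hk
      have : k.1 ≠ 0 := fun h => hk (Fin.ext h)
      simp [this]
    · simp
  have hAW : (L.A)ᵀ *ᵥ (L.W m *ᵥ ys)
      = ∑ k : Fin m, ys k • (L.delta (k.1 + 1) • L.w k.1 + L.alpha (k.1 + 1) • L.w (k.1 + 1)
          + L.beta (k.1 + 2) • L.w (k.1 + 2)) := by
    rw [hWmul]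
    rw [show (L.A)ᵀ *ᵥ (∑ k : Fin m, ys k • L.w (k.1 + 1))
        = ∑ k : Fin m, (L.A)ᵀ *ᵥ (ys k • L.w (k.1 + 1))
      from map_sum ((L.A)ᵀ).mulVecLin _ Finset.univ]
    refine Finset.sum_congr rfl fun k _ => ?_
    rw [Matrix.mulVec_smul, hAtw (k.1 + 1) (by omega) (by omega)]
    have e : k.1 + 1 - 1 = k.1 := by omega
    rw [e, show k.1 + 1 + 1 = k.1 + 2 from rfl]
  have hWT : L.W m *ᵥ ((L.T m)ᵀ *ᵥ ys)
      = ∑ j : Fin m, ys j • (L.alpha (j.1 + 1) • L.w (j.1 + 1)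
          + (if j.1 = 0 then 0 else L.delta (j.1 + 1) • L.w j.1)
          + (if j.1 + 1 < m then L.beta (j.1 + 2) • L.w (j.1 + 2) else 0)) := by
    rw [hWmul]
    have step1 : ∀ k : Fin m, ((L.T m)ᵀ *ᵥ ys) k • L.w (k.1 + 1)
        = ∑ j : Fin m, (L.T m j k * ys j) • L.w (k.1 + 1) := by
      intro k
      rw [Matrix.mulVec, ← Finset.sum_smul]
      congr 1
    simp only [step1]
    rw [Finset.sum_comm]
    refine Finset.sum_congr rfl fun j _ => ?_
    have split : ∀ k : Fin m, (L.T m j k * ys j) • L.w (k.1 + 1)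
        = ys j • ((if k.1 = j.1 then L.alpha (j.1 + 1) • L.w (j.1 + 1) else 0)
          + (if k.1 = j.1 + 1 then L.beta (j.1 + 2) • L.w (j.1 + 2) else 0)
          + (if k.1 + 1 = j.1 then L.delta (j.1 + 1) • L.w j.1 else 0)) := by
      intro k
      simp only [LanczosData.T, Matrix.of_apply]
      by_cases h1 : j.1 = k.1
      · rw [if_pos h1, if_pos h1.symm, if_neg (by omega), if_neg (by omega),
          add_zero, add_zero, smul_smul, mul_comm, h1]
      · rw [if_neg h1]
        by_cases h2 : j.1 = k.1 + 1
        · rw [if_pos h2, if_neg (fun h => h1 (by omega)), if_neg (by omega), if_pos h2.symm,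
            zero_add, zero_add, smul_smul, mul_comm, ← h2]
        · rw [if_neg h2]
          by_cases h3 : k.1 = j.1 + 1
          · rw [if_pos h3, if_neg (fun h => h1 (by omega)), if_pos h3, if_neg (by omega),
              zero_add, add_zero, smul_smul, mul_comm, h3]
          · rw [if_neg h3, if_neg (fun h => h1 (by omega)), if_neg h3, if_neg (by omega)]
            simp
    simp only [split]
    rw [← Finset.smul_sum]
    congr 1
    rw [Finset.sum_add_distrib, Finset.sum_add_distrib, aux_sum_ite, aux_sum_ite]
    have h3 : ∑ k : Fin m, (if k.1 + 1 = j.1 then L.delta (j.1 + 1) • L.w j.1 else 0)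
        = if j.1 = 0 then 0 else L.delta (j.1 + 1) • L.w j.1 := by
      rcases Nat.eq_zero_or_pos j.1 with h0 | h0
      · rw [if_pos h0]
        apply Finset.sum_eq_zero; intro k _; rw [if_neg]; omega
      · rw [if_neg (by omega)]
        have heq : ∀ k : Fin m, (if k.1 + 1 = j.1 then L.delta (j.1 + 1) • L.w j.1 else 0)
            = (if k.1 = j.1 - 1 then L.delta (j.1 + 1) • L.w j.1 else 0) := by
          intro k; congr 1; simp only [eq_iff_iff]; omega
        simp only [heq, aux_sum_ite]
        rw [if_pos (by omega)]
    rw [h3, if_pos j.2]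
    abel
  have key : (L.A)ᵀ *ᵥ (L.W m *ᵥ ys)
      = r0s + (L.beta (m + 1) * ys ⟨m - 1, by omega⟩) • L.w (m + 1) := by
    rw [← hWTy, hWT, hAW, ← sub_eq_iff_eq_add', ← Finset.sum_sub_distrib]
    rw [Finset.sum_eq_single (⟨m - 1, by omega⟩ : Fin m)]
    · have e0 : (if (m - 1 : ℕ) = 0 then (0 : Fin n → ℝ)
          else L.delta (m - 1 + 1) • L.w (m - 1)) = L.delta (m - 1 + 1) • L.w (m - 1) := by
        split_ifs with h
        · rw [h, hd1, zero_smul]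
        · rfl
      simp only
      rw [if_neg (by omega : ¬ (m - 1 + 1 < m)), e0]
      have e1 : m - 1 + 1 = m := by omega
      have e2 : m - 1 + 2 = m + 1 := by omega
      rw [e1, e2, mul_comm, mul_smul, ← smul_sub]
      congr 1
      abel
    · intro j _ hj
      have hja : j.1 ≠ m - 1 := fun h => hj (Fin.ext h)
      have hlt : j.1 + 1 < m := by have := j.2; omega
      rw [if_pos hlt]
      by_cases h0 : j.1 = 0
      · rw [if_pos h0, ← smul_sub]
        simp only [h0, hd1]
        simp
      · rw [if_neg h0, ← smul_sub]
        convert smul_zero (ys j) using 2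
        abel
    · simp
  rw [Matrix.mulVec_add, key, hr0s]
  module
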